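/- Settling is idempotent: for every settling name σ and all r, s : ℝ, (σ^r)^s ≡ σ^r, where ≡ is hereditary extensional equality of settling names. -/

import Mathlib

/-- Settling names over ℝ: a family of pairs of a settling name and an open set of
reals, together with a family of pairs of a settling name and a real. -/
inductive SName : Type 1
  | mk (ι : Type) (elem : ι → SName) (cond : ι → Set ℝ) (hopen : ∀ i, IsOpen (cond i))
       (κ : Type) (relem : κ → SName) (rcond : κ → ℝ) : SName

namespace SName

/-- Index type of the open-set pairs. -/
def idx : SName → Type
  | mk ι _ _ _ _ _ _ => ι

/-- Name component of an open-set pair. -/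
def elem : (σ : SName) → σ.idx → SName
  | mk _ e _ _ _ _ _ => e

/-- Open-set component of an open-set pair. -/
def cond : (σ : SName) → σ.idx → Set ℝ
  | mk _ _ c _ _ _ _ => c

theorem cond_isOpen : ∀ (σ : SName) (i : σ.idx), IsOpen (σ.cond i)
  | mk _ _ _ h _ _ _ => h

/-- Index type of the real pairs. -/
def ridx : SName → Type
  | mk _ _ _ _ κ _ _ => κ

/-- Name component of a real pair. -/
def relem : (σ : SName) → σ.ridx → SName
  | mk _ _ _ _ _ re _ => re

/-- Real component of a real pair. -/
def rcond : (σ : SName) → σ.ridx → ℝ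
  | mk _ _ _ _ _ _ rc => rc

/-- Hereditary extensional equality of settling names. -/
def equiv : SName → SName → Prop
  | mk _ e c _ _ re rc, mk _ e' c' _ _ re' rc' =>
    ((∀ i, ∃ i', equiv (e i) (e' i') ∧ c i = c' i') ∧
     (∀ i', ∃ i, equiv (e i) (e' i') ∧ c i = c' i')) ∧
    ((∀ h, ∃ h', equiv (re h) (re' h') ∧ rc h = rc' h') ∧
     (∀ h', ∃ h, equiv (re h) (re' h') ∧ rc h = rc' h'))

/-- The settling σ^r of a settling name σ at a real r. -/
def settle : SName → ℝ → SName
  | mk ι e c _ κ re rc, r =>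
    mk ({i : ι // r ∈ c i} ⊕ {h : κ // rc h = r})
      (Sum.elim (fun i => settle (e i.1) r) (fun h => settle (re h.1) r))
      (fun _ => Set.univ) (fun _ => isOpen_univ)
      Empty (fun h => h.elim) (fun h => h.elim)

/-- Rank of a settling name (over the open-set pairs), used for the recursive
definition of settling forcing. -/
noncomputable def rank : SName → Ordinal.{0}
  | mk _ e _ _ _ _ _ => Ordinal.lsub fun i => rank (e i)

theorem rank_elem_lt : ∀ (σ : SName) (i : σ.idx), (σ.elem i).rank < σ.rank
  | mk ι e c h κ re rc, i => by
    simpa [rank, elem] using Ordinal.lt_lsub (fun i => rank (e i)) i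

mutual
  /-- `seq σ τ J` means `J ⊩₃ σ = τ`. -/
  def seq (σ τ : SName) (J : Set ℝ) : Prop :=
    (∀ i : σ.idx, smem (σ.elem i) τ (J ∩ σ.cond i)) ∧
    (∀ j : τ.idx, smem (τ.elem j) σ (J ∩ τ.cond j)) ∧
    (∀ r ∈ J, equiv (σ.settle r) (τ.settle r))
  termination_by (max σ.rank τ.rank, min σ.rank τ.rank)
  decreasing_by
    all_goals
      have X : ∀ {a a' b : Ordinal.{0}}, a' < a →
          Prod.Lex (· < ·) (· < ·) (max a' b, min a' b) (max a b, min a b) := by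
        intro a a' b h
        rcases lt_or_eq_of_le (max_le_max_right b h.le) with h' | h'
        · exact Prod.Lex.left _ _ h'
        · rw [h']; apply Prod.Lex.right
          rcases le_total a b with h2 | h2
          · rw [min_eq_left h2]; exact lt_of_le_of_lt (min_le_left _ _) h
          · have hb : b = a := by
              rw [max_eq_left h2] at h'
              rcases le_total a' b with h3 | h3
              · rw [max_eq_right h3] at h'; exact h'
              · rw [max_eq_left h3] at h'; exact absurd h' (ne_of_lt h)
            subst hb; rw [min_self]; exact lt_of_le_of_lt (min_le_left _ _) h
    · exact X (rank_elem_lt σ i)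
    · rw [max_comm σ.rank τ.rank, min_comm σ.rank τ.rank]
      exact X (rank_elem_lt τ j)

  /-- `smem σ τ J` means `J ⊩₃ σ ∈ τ`. -/
  def smem (σ τ : SName) (J : Set ℝ) : Prop :=
    (∀ r ∈ J, ∃ (j : τ.idx) (J' : Set ℝ), IsOpen J' ∧ J' ⊆ J ∧ r ∈ J' ∩ τ.cond j ∧
      seq σ (τ.elem j) (J' ∩ τ.cond j)) ∧
    (∀ r ∈ J, ∃ k : (τ.settle r).idx,
      (τ.settle r).cond k = Set.univ ∧ equiv ((τ.settle r).elem k) (σ.settle r))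
  termination_by (max σ.rank τ.rank, min σ.rank τ.rank)
  decreasing_by
    have X : ∀ {a a' b : Ordinal.{0}}, a' < a →
        Prod.Lex (· < ·) (· < ·) (max a' b, min a' b) (max a b, min a b) := by
      intro a a' b h
      rcases lt_or_eq_of_le (max_le_max_right b h.le) with h' | h'
      · exact Prod.Lex.left _ _ h'
      · rw [h']; apply Prod.Lex.right
        rcases le_total a b with h2 | h2
        · rw [min_eq_left h2]; exact lt_of_le_of_lt (min_le_left _ _) h
        · have hb : b = a := by
            rw [max_eq_left h2] at h'
            rcases le_total a' b with h3 | h3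
            · rw [max_eq_right h3] at h'; exact h'
            · rw [max_eq_left h3] at h'; exact absurd h' (ne_of_lt h)
          subst hb; rw [min_self]; exact lt_of_le_of_lt (min_le_left _ _) h
    rw [max_comm σ.rank, min_comm σ.rank, max_comm σ.rank, min_comm σ.rank]
    exact X (rank_elem_lt τ j)
end

end SName

theorem settle_idempotent (σ : SName) (r s : ℝ) :
    SName.equiv ((σ.settle r).settle s) (σ.settle r) := by
  induction σ with
  | mk ι e c h κ re rc ih rih =>
    -- `σ^r` has only `Set.univ` conditions and no real pairs, so settling it again at `s`
    -- keeps every pair and only settles the name components once more.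
    have elem_idem : ∀ a, ((((SName.mk ι e c h κ re rc).settle r).elem a).settle s).equiv
        (((SName.mk ι e c h κ re rc).settle r).elem a)
      | .inl ⟨i, _⟩ => ih i
      | .inr ⟨k, _⟩ => rih k
    refine ⟨⟨?_, fun a => ⟨.inl ⟨a, trivial⟩, elem_idem a, rfl⟩⟩, nofun, nofun⟩
    rintro (⟨a, -⟩ | ⟨⟨⟩, -⟩)
    exact ⟨a, elem_idem a, rfl⟩
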